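/- arXiv:1711.02574 — 4 statements merged into one kernel-verified Lean document; each statement's English description precedes it below -/
import Mathlib

section
/- Fix L ∈ ℕ, ε > 0, and positive reals V_0,…,V_L (level variances) and C_0,…,C_L (level costs). Over all vectors (n_0,…,n_L) of positive reals satisfying the constraint Σ_{ℓ=0}^{L} V_ℓ / n_ℓ = ε²/2, the total cost Σ_{ℓ=0}^{L} n_ℓ C_ℓ is minimized by n_ℓ* = (2/ε²) · √(V_ℓ / C_ℓ) · Σ_{i=0}^{L} √(V_i C_i), and the minimal total cost equals (2/ε²) · (Σ_{ℓ=0}^{L} √(V_ℓ C_ℓ))². -/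
open Finset

lemma sqrt_div_mul_sqrt_mul {a b : ℝ} (ha : 0 < a) (hb : 0 < b) :
    Real.sqrt (a / b) * Real.sqrt (a * b) = a := by
  rw [← Real.sqrt_mul (div_pos ha hb).le]
  have : a / b * (a * b) = a ^ 2 := by field_simp
  rw [this, Real.sqrt_sq ha.le]

lemma sqrt_div_mul' {a b : ℝ} (ha : 0 < a) (hb : 0 < b) :
    Real.sqrt (a / b) * b = Real.sqrt (a * b) := by
  calc Real.sqrt (a / b) * b
      = Real.sqrt (a / b) * Real.sqrt (b ^ 2) := by rw [Real.sqrt_sq hb.le]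
    _ = Real.sqrt (a / b * b ^ 2) := (Real.sqrt_mul (div_pos ha hb).le _).symm
    _ = Real.sqrt (a * b) := by
        congr 1
        field_simp

/-- **optimal MLMC sample allocation.**
Subject to `Σ_ℓ V_ℓ / n_ℓ = ε²/2` over positive real vectors `n`, the total cost
`Σ_ℓ n_ℓ C_ℓ` is minimized by `n_ℓ* = (2/ε²) √(V_ℓ/C_ℓ) Σ_i √(V_i C_i)`, and the minimal
cost equals `(2/ε²) (Σ_ℓ √(V_ℓ C_ℓ))²`. -/
theorem mlmc_optimal_samples
    (L : ℕ) (ε : ℝ) (hε : 0 < ε) (V C : Fin (L + 1) → ℝ)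
    (hV : ∀ ℓ, 0 < V ℓ) (hC : ∀ ℓ, 0 < C ℓ) :
    let nstar : Fin (L + 1) → ℝ :=
      fun ℓ => (2 / ε ^ 2) * Real.sqrt (V ℓ / C ℓ) * ∑ i, Real.sqrt (V i * C i)
    (∀ ℓ, 0 < nstar ℓ) ∧
    (∑ ℓ, V ℓ / nstar ℓ) = ε ^ 2 / 2 ∧
    (∑ ℓ, nstar ℓ * C ℓ) = (2 / ε ^ 2) * (∑ ℓ, Real.sqrt (V ℓ * C ℓ)) ^ 2 ∧
    (∀ n : Fin (L + 1) → ℝ, (∀ ℓ, 0 < n ℓ) → (∑ ℓ, V ℓ / n ℓ) = ε ^ 2 / 2 →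
      (∑ ℓ, nstar ℓ * C ℓ) ≤ ∑ ℓ, n ℓ * C ℓ) := by
  intro nstar
  set S := ∑ i, Real.sqrt (V i * C i) with hS
  have hSpos : 0 < S :=
    Finset.sum_pos (fun i _ => Real.sqrt_pos.mpr (mul_pos (hV i) (hC i)))
      ⟨0, Finset.mem_univ 0⟩
  have hsq : ∀ ℓ, Real.sqrt (V ℓ / C ℓ) * Real.sqrt (V ℓ * C ℓ) = V ℓ :=
    fun ℓ => sqrt_div_mul_sqrt_mul (hV ℓ) (hC ℓ)
  have hsq' : ∀ ℓ, Real.sqrt (V ℓ / C ℓ) * C ℓ = Real.sqrt (V ℓ * C ℓ) :=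
    fun ℓ => sqrt_div_mul' (hV ℓ) (hC ℓ)
  have hposrt : ∀ ℓ, 0 < Real.sqrt (V ℓ / C ℓ) :=
    fun ℓ => Real.sqrt_pos.mpr (div_pos (hV ℓ) (hC ℓ))
  have hpos : ∀ ℓ, 0 < nstar ℓ := by
    intro ℓ
    have h1 := hposrt ℓ
    have h2 := hSpos
    have h3 : (0:ℝ) < 2 / ε ^ 2 := by positivity
    exact mul_pos (mul_pos h3 h1) h2
  have hcost : ∀ ℓ : Fin (L + 1),
      nstar ℓ * C ℓ = (2 / ε ^ 2) * S * Real.sqrt (V ℓ * C ℓ) := by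
    intro ℓ
    show (2 / ε ^ 2) * Real.sqrt (V ℓ / C ℓ) * S * C ℓ = _
    rw [show (2 / ε ^ 2) * Real.sqrt (V ℓ / C ℓ) * S * C ℓ
        = (2 / ε ^ 2) * S * (Real.sqrt (V ℓ / C ℓ) * C ℓ) by ring, hsq' ℓ]
  have hcostsum : (∑ ℓ, nstar ℓ * C ℓ) = (2 / ε ^ 2) * S ^ 2 := by
    rw [Finset.sum_congr rfl (fun ℓ _ => hcost ℓ), ← Finset.mul_sum, ← hS]
    ring
  refine ⟨hpos, ?_, by rw [hcostsum], ?_⟩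
  · have key : ∀ ℓ : Fin (L + 1),
        V ℓ / nstar ℓ = ε ^ 2 / 2 * (Real.sqrt (V ℓ * C ℓ) / S) := by
      intro ℓ
      show V ℓ / ((2 / ε ^ 2) * Real.sqrt (V ℓ / C ℓ) * S) = _
      have h1 : ε ^ 2 / 2 * (2 / ε ^ 2) = 1 := by
        have : ε ^ 2 ≠ 0 := by positivity
        field_simp
      have h2 : ε ^ 2 / 2 * (Real.sqrt (V ℓ * C ℓ) / S)
            * ((2 / ε ^ 2) * Real.sqrt (V ℓ / C ℓ) * S)
          = (Real.sqrt (V ℓ / C ℓ) * Real.sqrt (V ℓ * C ℓ))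
            * (ε ^ 2 / 2 * (2 / ε ^ 2)) * (S / S) := by ring
      rw [div_eq_iff (hpos ℓ).ne']
      show V ℓ = ε ^ 2 / 2 * (Real.sqrt (V ℓ * C ℓ) / S)
          * ((2 / ε ^ 2) * Real.sqrt (V ℓ / C ℓ) * S)
      rw [h2, hsq ℓ, h1, div_self hSpos.ne', mul_one, mul_one]
    rw [Finset.sum_congr rfl (fun ℓ _ => key ℓ), ← Finset.mul_sum, ← Finset.sum_div,
      div_self hSpos.ne', mul_one]
  · intro n hn hcon
    have key : S ^ 2 ≤ (ε ^ 2 / 2) * ∑ ℓ, n ℓ * C ℓ := by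
      have cs := Finset.sum_mul_sq_le_sq_mul_sq Finset.univ
        (fun ℓ => Real.sqrt (V ℓ / n ℓ)) (fun ℓ => Real.sqrt (n ℓ * C ℓ))
      have e1 : ∀ ℓ : Fin (L + 1), Real.sqrt (V ℓ / n ℓ) * Real.sqrt (n ℓ * C ℓ)
          = Real.sqrt (V ℓ * C ℓ) := by
        intro ℓ
        rw [← Real.sqrt_mul (div_pos (hV ℓ) (hn ℓ)).le]
        congr 1
        have := (hn ℓ).ne'
        field_simp
      have e2 : ∀ ℓ : Fin (L + 1), Real.sqrt (V ℓ / n ℓ) ^ 2 = V ℓ / n ℓ :=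
        fun ℓ => Real.sq_sqrt (div_pos (hV ℓ) (hn ℓ)).le
      have e3 : ∀ ℓ : Fin (L + 1), Real.sqrt (n ℓ * C ℓ) ^ 2 = n ℓ * C ℓ :=
        fun ℓ => Real.sq_sqrt (mul_pos (hn ℓ) (hC ℓ)).le
      calc S ^ 2 = (∑ ℓ, Real.sqrt (V ℓ / n ℓ) * Real.sqrt (n ℓ * C ℓ)) ^ 2 := by
            rw [hS, Finset.sum_congr rfl (fun ℓ _ => e1 ℓ)]
        _ ≤ (∑ ℓ, Real.sqrt (V ℓ / n ℓ) ^ 2) * ∑ ℓ, Real.sqrt (n ℓ * C ℓ) ^ 2 := cs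
        _ = (ε ^ 2 / 2) * ∑ ℓ, n ℓ * C ℓ := by
            rw [Finset.sum_congr rfl (fun ℓ _ => e2 ℓ),
              Finset.sum_congr rfl (fun ℓ _ => e3 ℓ), hcon]
    rw [hcostsum]
    calc (2 / ε ^ 2) * S ^ 2 ≤ (2 / ε ^ 2) * ((ε ^ 2 / 2) * ∑ ℓ, n ℓ * C ℓ) :=
          mul_le_mul_of_nonneg_left key (by positivity)
      _ = ∑ ℓ, n ℓ * C ℓ := by
          field_simp
end

section
/- (MLMC cost theorem.) Let m_ℓ = m_0 · 2^ℓ for some integer m_0 ≥ 1, and suppose there are positive constants ρ, φ, κ and c_1, c_2, c_3 with ρ > (1/2)·min(φ, κ) such that for all ℓ ≥ 0 the bias b_ℓ, level variance V_ℓ, and level cost C_ℓ satisfy b_ℓ ≤ c_1 m_ℓ^{−ρ}, V_ℓ ≤ c_2 m_ℓ^{−φ}, and C_ℓ ≤ c_3 m_ℓ^{κ}. Then there exists a constant c_4 (independent of ε) such that for every ε < e^{−1} there exist L ∈ ℕ and positive integers n_0, …, n_L with Σ_{ℓ=0}^{L} n_ℓ⁻¹ V_ℓ + b_L² ≤ ε²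 and total cost Σ_{ℓ=0}^{L} n_ℓ C_ℓ ≤ c_4 · ε^{−2} if φ > κ, ≤ c_4 · ε^{−2} (log ε)² if φ = κ, and ≤ c_4 · ε^{−2−(κ−φ)/ρ} if φ < κ. -/
open Finset Real


lemma gsum_lt_one {x : ℝ} (h0 : 0 ≤ x) (h1 : x < 1) (n : ℕ) :
    ∑ k ∈ range n, x^k ≤ 1/(1-x) := by
  rw [geom_sum_eq h1.ne n, ← neg_div_neg_eq, neg_sub, neg_sub]
  exact div_le_div_of_nonneg_right (by nlinarith [pow_nonneg h0 n]) (by linarith) |>.trans_eq rfl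

lemma gsum_gt_one {x : ℝ} (h1 : 1 < x) (n : ℕ) :
    ∑ k ∈ range n, x^k ≤ x^n/(x-1) := by
  rw [geom_sum_eq h1.ne' n]
  apply div_le_div_of_nonneg_right (by linarith) (by linarith) |>.trans_eq rfl

lemma pow_rpow_comm (t : ℝ) (k : ℕ) : ((2:ℝ)^k) ^ t = ((2:ℝ)^t)^k := by
  rw [← Real.rpow_natCast 2 k, ← Real.rpow_mul (by norm_num), mul_comm,
    Real.rpow_mul (by norm_num), Real.rpow_natCast]

lemma m_rpow_split (m₀ : ℕ) (t : ℝ) (k : ℕ) :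
    ((m₀:ℝ) * 2^k) ^ t = (m₀:ℝ)^t * ((2:ℝ)^t)^k := by
  rw [Real.mul_rpow (by positivity) (by positivity), pow_rpow_comm]

lemma sum_m_rpow_le_of_pos (m₀ : ℕ) (t : ℝ) (ht : 0 < t) (L : ℕ) :
    ∑ k ∈ range (L+1), ((m₀:ℝ) * 2^k) ^ t
      ≤ (2:ℝ)^t / ((2:ℝ)^t - 1) * ((m₀:ℝ) * 2^L) ^ t := by
  have h2t : (1:ℝ) < (2:ℝ)^t :=
    (Real.one_lt_rpow_iff_of_pos (by norm_num)).2 (Or.inl ⟨one_lt_two, ht⟩)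
  have hm0 : (0:ℝ) ≤ (m₀:ℝ)^t := by positivity
  calc ∑ k ∈ range (L+1), ((m₀:ℝ) * 2^k) ^ t
      = (m₀:ℝ)^t * ∑ k ∈ range (L+1), ((2:ℝ)^t)^k := by
        rw [mul_sum]; exact Finset.sum_congr rfl fun k _ => m_rpow_split m₀ t k
    _ ≤ (m₀:ℝ)^t * (((2:ℝ)^t)^(L+1) / ((2:ℝ)^t - 1)) :=
        mul_le_mul_of_nonneg_left (gsum_gt_one h2t (L+1)) hm0
    _ = (2:ℝ)^t / ((2:ℝ)^t - 1) * ((m₀:ℝ)^t * ((2:ℝ)^t)^L) := by ring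
    _ = (2:ℝ)^t / ((2:ℝ)^t - 1) * ((m₀:ℝ) * 2^L) ^ t := by rw [m_rpow_split]

lemma sum_m_rpow_le_of_neg (m₀ : ℕ) (hm₀ : 1 ≤ m₀) (t : ℝ) (ht : t < 0) (L : ℕ) :
    ∑ k ∈ range (L+1), ((m₀:ℝ) * 2^k) ^ t ≤ 1 / (1 - (2:ℝ)^t) := by
  have h2t0 : (0:ℝ) < (2:ℝ)^t := by positivity
  have h2t : (2:ℝ)^t < 1 := Real.rpow_lt_one_of_one_lt_of_neg one_lt_two ht
  have hm1 : (m₀:ℝ)^t ≤ 1 :=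
    Real.rpow_le_one_of_one_le_of_nonpos (by exact_mod_cast hm₀) ht.le
  calc ∑ k ∈ range (L+1), ((m₀:ℝ) * 2^k) ^ t
      ≤ ∑ k ∈ range (L+1), ((2:ℝ)^t)^k := by
        refine Finset.sum_le_sum fun k _ => ?_
        rw [m_rpow_split]
        exact mul_le_of_le_one_left (by positivity) hm1
    _ ≤ 1 / (1 - (2:ℝ)^t) := gsum_lt_one h2t0.le h2t (L+1)

lemma mlmc_core
    (m₀ : ℕ) (hm₀ : 1 ≤ m₀) (ρ φ κ c₁ c₂ c₃ : ℝ)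
    (hρ : 0 < ρ) (hc₁ : 0 < c₁) (hc₂ : 0 < c₂) (hc₃ : 0 < c₃)
    (b V C : ℕ → ℝ)
    (hV0 : ∀ ℓ, 0 ≤ V ℓ) (hC0 : ∀ ℓ, 0 ≤ C ℓ)
    (hb : ∀ ℓ, b ℓ ≤ c₁ * ((m₀ : ℝ) * 2 ^ ℓ) ^ (-ρ))
    (hbnn : ∀ ℓ, 0 ≤ b ℓ)
    (hV : ∀ ℓ, V ℓ ≤ c₂ * ((m₀ : ℝ) * 2 ^ ℓ) ^ (-φ))
    (hC : ∀ ℓ, C ℓ ≤ c₃ * ((m₀ : ℝ) * 2 ^ ℓ) ^ κ)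
    (ε : ℝ) (hε : 0 < ε) (hε1 : ε < 1) :
    ∃ (L : ℕ) (n : ℕ → ℕ), (∀ ℓ ≤ L, 1 ≤ n ℓ) ∧
      (∑ ℓ ∈ Finset.range (L + 1), V ℓ / (n ℓ : ℝ)) + (b L) ^ 2 ≤ ε ^ 2 ∧
      (∑ ℓ ∈ Finset.range (L + 1), (n ℓ : ℝ) * C ℓ) ≤
        2 * (∑ k ∈ Finset.range (L+1),
              Real.sqrt (c₂*c₃) * ((m₀:ℝ) * 2^k) ^ ((κ - φ)/2)) ^ 2 / ε ^ 2
          + ∑ k ∈ Finset.range (L+1), c₃ * ((m₀:ℝ) * 2^k) ^ κ ∧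
      (m₀:ℝ) * 2^L ≤ max (m₀:ℝ) (2 * (Real.sqrt 2 * c₁)^(1/ρ)) * ε ^ (-1/ρ) := by
  classical
  have hm₀R : (1:ℝ) ≤ (m₀:ℝ) := by exact_mod_cast hm₀
  have hmpos : ∀ k : ℕ, (0:ℝ) < (m₀:ℝ) * 2^k := fun k => by positivity
  have hs2 : (0:ℝ) < Real.sqrt 2 := by positivity
  set M : ℝ := (Real.sqrt 2 * c₁ / ε) ^ (1/ρ) with hMdef
  have hM0 : 0 < M := by
    have : 0 < Real.sqrt 2 * c₁ / ε := by positivity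
    positivity
  -- existence of level L
  have hex : ∃ L : ℕ, M ≤ (m₀:ℝ) * 2^L := by
    obtain ⟨L₀, hL₀⟩ := pow_unbounded_of_one_lt (M) (one_lt_two (α := ℝ))
    exact ⟨L₀, le_trans hL₀.le (le_mul_of_one_le_left (by positivity) hm₀R)⟩
  obtain ⟨L, hML, hmin⟩ : ∃ L, M ≤ (m₀:ℝ) * 2^L ∧ ∀ l < L, (m₀:ℝ)*2^l < M :=
    ⟨Nat.find hex, Nat.find_spec hex, fun l hl => not_le.1 (Nat.find_min hex hl)⟩
  -- bias bound
  have hbias : b L ^ 2 ≤ ε^2 / 2 := by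
    have hMρ : Real.sqrt 2 * c₁ / ε ≤ ((m₀:ℝ) * 2^L) ^ ρ := by
      have := Real.rpow_le_rpow hM0.le hML hρ.le
      rwa [hMdef, ← Real.rpow_mul (by positivity), one_div_mul_cancel hρ.ne',
        Real.rpow_one] at this
    have hP : (0:ℝ) < ((m₀:ℝ)*2^L)^ρ := by positivity
    have hbL : b L ≤ ε / Real.sqrt 2 := by
      refine (hb L).trans ?_
      have h2 : Real.sqrt 2 * c₁ ≤ ε * ((m₀:ℝ)*2^L)^ρ := by
        rw [div_le_iff₀ hε] at hMρ; linarith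
      rw [Real.rpow_neg (hmpos L).le, le_div_iff₀ hs2]
      calc c₁ * (((m₀:ℝ)*2^L)^ρ)⁻¹ * Real.sqrt 2
          = (Real.sqrt 2 * c₁) * (((m₀:ℝ)*2^L)^ρ)⁻¹ := by ring
        _ ≤ (ε * ((m₀:ℝ)*2^L)^ρ) * (((m₀:ℝ)*2^L)^ρ)⁻¹ :=
            mul_le_mul_of_nonneg_right h2 (inv_nonneg.2 hP.le)
        _ = ε := by field_simp
    calc b L ^ 2 ≤ (ε / Real.sqrt 2)^2 := pow_le_pow_left₀ (hbnn L) hbL 2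
      _ = ε^2 / 2 := by rw [div_pow, Real.sq_sqrt (by norm_num : (0:ℝ) ≤ 2)]
  -- level bound
  have hmLbound : (m₀:ℝ) * 2^L ≤ max (m₀:ℝ) (2 * (Real.sqrt 2 * c₁)^(1/ρ)) * ε ^ (-1/ρ) := by
    have hεr : (1:ℝ) ≤ ε ^ (-1/ρ) := by
      apply Real.one_le_rpow_of_pos_of_le_one_of_nonpos hε hε1.le
      rw [neg_div]; exact neg_nonpos.2 (by positivity)
    rcases Nat.eq_zero_or_pos L with h0 | hpos
    · rw [h0]
      calc (m₀:ℝ) * 2^(0:ℕ) = (m₀:ℝ) := by norm_num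
        _ ≤ (m₀:ℝ) * ε ^ (-1/ρ) := le_mul_of_one_le_right (by positivity) hεr
        _ ≤ _ := mul_le_mul_of_nonneg_right (le_max_left _ _) (by positivity)
    · obtain ⟨l, rfl⟩ := Nat.exists_eq_succ_of_ne_zero hpos.ne'
      have hlt : (m₀:ℝ) * 2^l < M := hmin l (Nat.lt_succ_self l)
      have hM2 : M = (Real.sqrt 2 * c₁)^(1/ρ) * ε^(-1/ρ) := by
        rw [hMdef, Real.div_rpow (by positivity) hε.le, div_eq_mul_inv,
          ← Real.rpow_neg hε.le, neg_div]
      calc (m₀:ℝ) * 2^(l+1) = 2 * ((m₀:ℝ) * 2^l) := by ring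
        _ ≤ 2 * M := by linarith
        _ = 2 * (Real.sqrt 2 * c₁)^(1/ρ) * ε^(-1/ρ) := by rw [hM2]; ring
        _ ≤ _ := mul_le_mul_of_nonneg_right (le_max_right _ _) (by positivity)
  -- sample sizes
  have hr2 : ∀ ℓ:ℕ, (((m₀:ℝ)*2^ℓ)^((κ-φ)/2))^2 = ((m₀:ℝ)*2^ℓ)^(-φ) * ((m₀:ℝ)*2^ℓ)^κ := by
    intro ℓ
    rw [← Real.rpow_natCast (((m₀:ℝ)*2^ℓ)^((κ-φ)/2)) 2, ← Real.rpow_mul (hmpos ℓ).le,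
      ← Real.rpow_add (hmpos ℓ)]
    congr 1
    push_cast; ring
  set w : ℕ → ℝ := fun ℓ => Real.sqrt (c₂*c₃) * ((m₀:ℝ)*2^ℓ)^((κ-φ)/2) with hwdef
  have hw0 : ∀ ℓ, 0 < w ℓ := fun ℓ => by
    simp only [hwdef]; have := mul_pos hc₂ hc₃; positivity
  have hw2 : ∀ ℓ, w ℓ^2 = (c₂ * ((m₀:ℝ)*2^ℓ)^(-φ)) * (c₃ * ((m₀:ℝ)*2^ℓ)^κ) := by
    intro ℓ
    simp only [hwdef]
    rw [mul_pow, Real.sq_sqrt (mul_pos hc₂ hc₃).le, hr2]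
    ring
  set S := ∑ k ∈ Finset.range (L+1), w k with hSdef
  have hS0 : 0 < S := Finset.sum_pos (fun k _ => hw0 k) Finset.nonempty_range_add_one
  set x : ℕ → ℝ := fun ℓ => 2 * S * (c₂ * ((m₀:ℝ)*2^ℓ)^(-φ)) / (ε^2 * w ℓ) with hxdef
  have hx0 : ∀ ℓ, 0 < x ℓ := fun ℓ => by
    simp only [hxdef]
    have h1 := hw0 ℓ
    have h2 : (0:ℝ) < ((m₀:ℝ)*2^ℓ)^(-φ) := by positivity
    positivity
  refine ⟨L, fun ℓ => ⌈x ℓ⌉₊, fun ℓ _ => Nat.one_le_ceil_iff.2 (hx0 ℓ), ?_, ?_, hmLbound⟩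
  · -- MSE
    have hterm : ∀ ℓ ∈ Finset.range (L+1), V ℓ / (⌈x ℓ⌉₊ : ℝ) ≤ ε^2/(2*S) * w ℓ := by
      intro ℓ _
      have h1 : V ℓ / (⌈x ℓ⌉₊ : ℝ) ≤ (c₂ * ((m₀:ℝ)*2^ℓ)^(-φ)) / x ℓ :=
        div_le_div₀ (by positivity) (hV ℓ) (hx0 ℓ) (Nat.le_ceil _)
      have h2 : (c₂ * ((m₀:ℝ)*2^ℓ)^(-φ)) / x ℓ = ε^2/(2*S) * w ℓ := by
        simp only [hxdef]
        have hv : (0:ℝ) < c₂ * ((m₀:ℝ)*2^ℓ)^(-φ) := by positivity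
        field_simp [(hw0 ℓ).ne', hS0.ne', hv.ne']
      exact h1.trans_eq h2
    have hsum : ∑ ℓ ∈ Finset.range (L+1), V ℓ / (⌈x ℓ⌉₊ : ℝ) ≤ ε^2/2 := by
      calc ∑ ℓ ∈ Finset.range (L+1), V ℓ / (⌈x ℓ⌉₊ : ℝ)
          ≤ ∑ ℓ ∈ Finset.range (L+1), ε^2/(2*S) * w ℓ := Finset.sum_le_sum hterm
        _ = ε^2/(2*S) * S := by rw [← Finset.mul_sum, ← hSdef]
        _ = ε^2/2 := by field_simp
    linarith
  · -- cost
    have hterm : ∀ ℓ ∈ Finset.range (L+1), (⌈x ℓ⌉₊ : ℝ) * C ℓ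
        ≤ 2*S/ε^2 * w ℓ + c₃ * ((m₀:ℝ)*2^ℓ)^κ := by
      intro ℓ _
      have hK0 : (0:ℝ) < c₃ * ((m₀:ℝ)*2^ℓ)^κ := by positivity
      have h1 : (⌈x ℓ⌉₊ : ℝ) * C ℓ ≤ (x ℓ + 1) * (c₃ * ((m₀:ℝ)*2^ℓ)^κ) :=
        mul_le_mul (Nat.ceil_lt_add_one (hx0 ℓ).le).le (hC ℓ) (hC0 ℓ)
          (by have := hx0 ℓ; linarith)
      have h2 : x ℓ * (c₃ * ((m₀:ℝ)*2^ℓ)^κ) = 2*S/ε^2 * w ℓ := by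
        have hvK := hw2 ℓ
        simp only [hxdef]
        field_simp [(hw0 ℓ).ne']
        linear_combination (-1:ℝ) * hvK
      nlinarith [h1, h2, hK0]
    calc ∑ ℓ ∈ Finset.range (L+1), (⌈x ℓ⌉₊ : ℝ) * C ℓ
        ≤ ∑ ℓ ∈ Finset.range (L+1), (2*S/ε^2 * w ℓ + c₃ * ((m₀:ℝ)*2^ℓ)^κ) :=
          Finset.sum_le_sum hterm
      _ = 2*S/ε^2 * S + ∑ k ∈ Finset.range (L+1), c₃ * ((m₀:ℝ)*2^k)^κ := by
          rw [Finset.sum_add_distrib, ← Finset.mul_sum, ← hSdef]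
      _ = 2*S^2/ε^2 + ∑ k ∈ Finset.range (L+1), c₃ * ((m₀:ℝ)*2^k)^κ := by ring
      _ ≤ _ := by rw [hSdef]

lemma mlmc_T_le (m₀ : ℕ) (κ c₃ : ℝ) (hκ : 0 < κ) (hc₃ : 0 < c₃) (L : ℕ) (Bnd : ℝ)
    (hL : (m₀:ℝ)*2^L ≤ Bnd) :
    ∑ k ∈ Finset.range (L+1), c₃ * ((m₀:ℝ)*2^k)^κ
      ≤ (c₃ * (2:ℝ)^κ / ((2:ℝ)^κ - 1)) * Bnd^κ := by
  have h2κ : (1:ℝ) < (2:ℝ)^κ :=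
    (Real.one_lt_rpow_iff_of_pos (by norm_num)).2 (Or.inl ⟨one_lt_two, hκ⟩)
  have hm : (0:ℝ) ≤ (m₀:ℝ)*2^L := by positivity
  calc ∑ k ∈ Finset.range (L+1), c₃ * ((m₀:ℝ)*2^k)^κ
      = c₃ * ∑ k ∈ Finset.range (L+1), ((m₀:ℝ)*2^k)^κ := by rw [Finset.mul_sum]
    _ ≤ c₃ * ((2:ℝ)^κ / ((2:ℝ)^κ - 1) * ((m₀:ℝ)*2^L)^κ) :=
        mul_le_mul_of_nonneg_left (sum_m_rpow_le_of_pos m₀ κ hκ L) hc₃.le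
    _ = (c₃ * (2:ℝ)^κ / ((2:ℝ)^κ - 1)) * ((m₀:ℝ)*2^L)^κ := by ring
    _ ≤ (c₃ * (2:ℝ)^κ / ((2:ℝ)^κ - 1)) * Bnd^κ := by
        apply mul_le_mul_of_nonneg_left (Real.rpow_le_rpow hm hL hκ.le)
        have : (0:ℝ) < (2:ℝ)^κ - 1 := by linarith
        positivity

set_option maxHeartbeats 1000000 in
/-- **MLMC cost theorem.**
With grid sizes `m_ℓ = m_0 2^ℓ`, bias `b_ℓ ≤ c₁ m_ℓ^{−ρ}`, level variance
`V_ℓ ≤ c₂ m_ℓ^{−φ}`, and level cost `C_ℓ ≤ c₃ m_ℓ^{κ}`, where `ρ > min(φ,κ)/2`, there is a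
constant `c₄` such that for every `ε < e^{−1}` there exist `L` and sample numbers `n_ℓ ≥ 1`
with MSE `Σ_ℓ V_ℓ/n_ℓ + b_L² ≤ ε²` and total cost bounded by `c₄ ε^{−2}` (if `φ > κ`),
`c₄ ε^{−2} (log ε)²` (if `φ = κ`), or `c₄ ε^{−2−(κ−φ)/ρ}` (if `φ < κ`). -/
theorem mlmc_cost_theorem
    (m₀ : ℕ) (hm₀ : 1 ≤ m₀) (ρ φ κ c₁ c₂ c₃ : ℝ)
    (hρ : 0 < ρ) (hφ : 0 < φ) (hκ : 0 < κ)
    (hc₁ : 0 < c₁) (hc₂ : 0 < c₂) (hc₃ : 0 < c₃)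
    (hρmin : (1 / 2) * min φ κ < ρ)
    (b V C : ℕ → ℝ)
    (hb0 : ∀ ℓ, 0 ≤ b ℓ) (hV0 : ∀ ℓ, 0 ≤ V ℓ) (hC0 : ∀ ℓ, 0 ≤ C ℓ)
    (hb : ∀ ℓ, b ℓ ≤ c₁ * ((m₀ : ℝ) * 2 ^ ℓ) ^ (-ρ))
    (hV : ∀ ℓ, V ℓ ≤ c₂ * ((m₀ : ℝ) * 2 ^ ℓ) ^ (-φ))
    (hC : ∀ ℓ, C ℓ ≤ c₃ * ((m₀ : ℝ) * 2 ^ ℓ) ^ κ) :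
    ∃ c₄ : ℝ, 0 < c₄ ∧ ∀ ε : ℝ, 0 < ε → ε < Real.exp (-1) →
      ∃ (L : ℕ) (n : ℕ → ℕ), (∀ ℓ ≤ L, 1 ≤ n ℓ) ∧
        (∑ ℓ ∈ Finset.range (L + 1), V ℓ / (n ℓ : ℝ)) + (b L) ^ 2 ≤ ε ^ 2 ∧
        (∑ ℓ ∈ Finset.range (L + 1), (n ℓ : ℝ) * C ℓ) ≤
          (if κ < φ then c₄ * ε ^ (-2 : ℝ)
           else if φ = κ then c₄ * ε ^ (-2 : ℝ) * (Real.log ε) ^ 2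
           else c₄ * ε ^ (-(2 + (κ - φ) / ρ))) := by
  have hm₀R : (1:ℝ) ≤ (m₀:ℝ) := by exact_mod_cast hm₀
  set A := max (m₀:ℝ) (2 * (Real.sqrt 2 * c₁)^(1/ρ)) with hAdef
  have hA1 : (1:ℝ) ≤ A := le_max_of_le_left hm₀R
  have hA0 : (0:ℝ) < A := lt_of_lt_of_le one_pos hA1
  have h2κ : (1:ℝ) < (2:ℝ)^κ :=
    (Real.one_lt_rpow_iff_of_pos (by norm_num)).2 (Or.inl ⟨one_lt_two, hκ⟩)
  set D := c₃ * (2:ℝ)^κ / ((2:ℝ)^κ - 1) with hDdef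
  have hD0 : 0 < D := by
    rw [hDdef]; have : (0:ℝ) < (2:ℝ)^κ - 1 := by linarith
    positivity
  have hAκ : (0:ℝ) < A^κ := Real.rpow_pos_of_pos hA0 κ
  rcases lt_trichotomy κ φ with hcase | hcase | hcase
  · -- κ < φ : cost c₄ ε⁻²
    have hrneg : (κ-φ)/2 < 0 := by linarith
    have h2r1 : (2:ℝ)^((κ-φ)/2) < 1 := Real.rpow_lt_one_of_one_lt_of_neg one_lt_two hrneg
    have h2r0 : (0:ℝ) < (2:ℝ)^((κ-φ)/2) := by positivity
    set Sb := Real.sqrt (c₂*c₃) * (1/(1 - (2:ℝ)^((κ-φ)/2))) with hSidef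
    have hSi0 : 0 < Sb := by
      rw [hSidef]
      have h1 : (0:ℝ) < 1 - (2:ℝ)^((κ-φ)/2) := by linarith
      have h2 : (0:ℝ) < c₂*c₃ := mul_pos hc₂ hc₃
      positivity
    refine ⟨2*Sb^2 + D*A^κ, by positivity, fun ε hε hεe => ?_⟩
    have hε1 : ε < 1 := hεe.trans (by norm_num [Real.exp_lt_one_iff])
    obtain ⟨L, n, hn, hmse, hcost, hmL⟩ :=
      mlmc_core m₀ hm₀ ρ φ κ c₁ c₂ c₃ hρ hc₁ hc₂ hc₃ b V C hV0 hC0 hb hb0 hV hC ε hε hε1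
    refine ⟨L, n, hn, hmse, ?_⟩
    rw [if_pos hcase]
    have hε2 : ε^(-2:ℝ) = (ε^2)⁻¹ := by
      rw [show (-2:ℝ) = -((2:ℕ):ℝ) by norm_num, Real.rpow_neg hε.le, Real.rpow_natCast]
    have hSnn : (0:ℝ) ≤ ∑ k ∈ Finset.range (L+1),
        Real.sqrt (c₂*c₃) * ((m₀:ℝ) * 2^k) ^ ((κ-φ)/2) :=
      Finset.sum_nonneg fun k _ => by positivity
    have hS : (∑ k ∈ Finset.range (L+1),
        Real.sqrt (c₂*c₃) * ((m₀:ℝ) * 2^k) ^ ((κ-φ)/2)) ≤ Sb := by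
      rw [hSidef, ← Finset.mul_sum]
      exact mul_le_mul_of_nonneg_left (sum_m_rpow_le_of_neg m₀ hm₀ _ hrneg L)
        (Real.sqrt_nonneg _)
    have hT : (∑ k ∈ Finset.range (L+1), c₃ * ((m₀:ℝ) * 2^k) ^ κ)
        ≤ D * A^κ * ε^(-2:ℝ) := by
      have h1 := mlmc_T_le m₀ κ c₃ hκ hc₃ L _ hmL
      have h2 : (A * ε^(-1/ρ))^κ = A^κ * ε^((-1/ρ)*κ) := by
        rw [Real.mul_rpow hA0.le (Real.rpow_nonneg hε.le _), ← Real.rpow_mul hε.le]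
      have h3 : ε^((-1/ρ)*κ) ≤ ε^(-2:ℝ) := by
        apply Real.rpow_le_rpow_of_exponent_ge hε hε1.le
        have hmin : min φ κ = κ := min_eq_right hcase.le
        rw [hmin] at hρmin
        have hκρ : κ/ρ ≤ 2 := (div_le_iff₀ hρ).2 (by linarith)
        have : (-1/ρ)*κ = -(κ/ρ) := by ring
        rw [this]; linarith
      calc (∑ k ∈ Finset.range (L+1), c₃ * ((m₀:ℝ) * 2^k) ^ κ)
          ≤ D * (A * ε^(-1/ρ))^κ := h1
        _ = D * A^κ * ε^((-1/ρ)*κ) := by rw [h2]; ring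
        _ ≤ D * A^κ * ε^(-2:ℝ) :=
            mul_le_mul_of_nonneg_left h3 (by positivity)
    calc (∑ ℓ ∈ Finset.range (L + 1), (n ℓ : ℝ) * C ℓ)
        ≤ 2 * (∑ k ∈ Finset.range (L+1),
            Real.sqrt (c₂*c₃) * ((m₀:ℝ) * 2^k) ^ ((κ-φ)/2)) ^ 2 / ε ^ 2
          + ∑ k ∈ Finset.range (L+1), c₃ * ((m₀:ℝ) * 2^k) ^ κ := hcost
      _ ≤ 2 * Sb^2 / ε^2 + D * A^κ * ε^(-2:ℝ) := by
          refine add_le_add ?_ hT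
          apply div_le_div_of_nonneg_right _ (by positivity)
          nlinarith [hS, hSnn, hSi0]
      _ = (2*Sb^2 + D*A^κ) * ε^(-2:ℝ) := by rw [hε2]; ring
  · -- φ = κ
    subst hcase
    have hlog2 : (0:ℝ) < Real.log 2 := Real.log_pos one_lt_two
    have hlogA : (0:ℝ) ≤ Real.log A := Real.log_nonneg hA1
    have hρinv : (0:ℝ) < 1/ρ := by positivity
    set B := (Real.log A + 1/ρ + Real.log 2)/Real.log 2 with hBdef
    have hB0 : 0 < B := div_pos (by linarith) hlog2
    refine ⟨2*c₂*c₃*B^2 + D*A^κ, by positivity, fun ε hε hεe => ?_⟩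
    have hε1 : ε < 1 := hεe.trans (by norm_num [Real.exp_lt_one_iff])
    obtain ⟨L, n, hn, hmse, hcost, hmL⟩ :=
      mlmc_core m₀ hm₀ ρ κ κ c₁ c₂ c₃ hρ hc₁ hc₂ hc₃ b V C hV0 hC0 hb hb0 hV hC ε hε hε1
    refine ⟨L, n, hn, hmse, ?_⟩
    rw [if_neg (lt_irrefl κ), if_pos rfl]
    have hε2 : ε^(-2:ℝ) = (ε^2)⁻¹ := by
      rw [show (-2:ℝ) = -((2:ℕ):ℝ) by norm_num, Real.rpow_neg hε.le, Real.rpow_natCast]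
    have hX : 1 ≤ -Real.log ε := by
      have h := Real.log_lt_log hε hεe
      rw [Real.log_exp] at h; linarith
    have hεre : (0:ℝ) < ε ^ (-1/ρ) := Real.rpow_pos_of_pos hε _
    have h2L : (2:ℝ)^L ≤ A * ε^(-1/ρ) :=
      le_trans (le_mul_of_one_le_left (by positivity) hm₀R) hmL
    have hXL : (L:ℝ)*Real.log 2 ≤ Real.log A + (-1/ρ)*Real.log ε := by
      have h := Real.log_le_log (by positivity : (0:ℝ) < (2:ℝ)^L) h2L
      rwa [Real.log_pow, Real.log_mul hA0.ne' hεre.ne', Real.log_rpow hε] at h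
    have hLX : ((L:ℝ)+1) ≤ B * (-Real.log ε) := by
      rw [hBdef, div_mul_eq_mul_div, le_div_iff₀ hlog2]
      have h1 : 0 ≤ (-Real.log ε - 1) * Real.log A := mul_nonneg (by linarith) hlogA
      have h2 : 0 ≤ (-Real.log ε - 1) * Real.log 2 := mul_nonneg (by linarith) hlog2.le
      have h3 : (L:ℝ)*Real.log 2 ≤ Real.log A + (1/ρ) * (-Real.log ε) := by
        have e : Real.log A + (1/ρ) * (-Real.log ε)
            = Real.log A + (-1/ρ)*Real.log ε := by ring
        rw [e]; exact hXL
      nlinarith [h1, h2, h3]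
    have hSeq : (∑ k ∈ Finset.range (L+1),
        Real.sqrt (c₂*c₃) * ((m₀:ℝ)*2^k)^((κ-κ)/2)) = Real.sqrt (c₂*c₃) * ((L:ℝ)+1) := by
      simp only [sub_self, zero_div, Real.rpow_zero, mul_one, Finset.sum_const,
        Finset.card_range, nsmul_eq_mul]
      push_cast; ring
    have hS2 : (Real.sqrt (c₂*c₃) * ((L:ℝ)+1))^2 ≤ c₂*c₃*(B*(-Real.log ε))^2 := by
      have h1 : ((L:ℝ)+1)^2 ≤ (B*(-Real.log ε))^2 :=
        pow_le_pow_left₀ (by positivity) hLX 2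
      rw [mul_pow, Real.sq_sqrt (mul_pos hc₂ hc₃).le]
      exact mul_le_mul_of_nonneg_left h1 (mul_pos hc₂ hc₃).le
    have hT : (∑ k ∈ Finset.range (L+1), c₃ * ((m₀:ℝ) * 2^k) ^ κ)
        ≤ D * A^κ * ε^(-2:ℝ) := by
      have h1 := mlmc_T_le m₀ κ c₃ hκ hc₃ L _ hmL
      have h2 : (A * ε^(-1/ρ))^κ = A^κ * ε^((-1/ρ)*κ) := by
        rw [Real.mul_rpow hA0.le (Real.rpow_nonneg hε.le _), ← Real.rpow_mul hε.le]
      have h3 : ε^((-1/ρ)*κ) ≤ ε^(-2:ℝ) := by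
        apply Real.rpow_le_rpow_of_exponent_ge hε hε1.le
        rw [min_self] at hρmin
        have hκρ : κ/ρ ≤ 2 := (div_le_iff₀ hρ).2 (by linarith)
        have : (-1/ρ)*κ = -(κ/ρ) := by ring
        rw [this]; linarith
      calc (∑ k ∈ Finset.range (L+1), c₃ * ((m₀:ℝ) * 2^k) ^ κ)
          ≤ D * (A * ε^(-1/ρ))^κ := h1
        _ = D * A^κ * ε^((-1/ρ)*κ) := by rw [h2]; ring
        _ ≤ D * A^κ * ε^(-2:ℝ) := mul_le_mul_of_nonneg_left h3 (by positivity)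
    calc (∑ ℓ ∈ Finset.range (L + 1), (n ℓ : ℝ) * C ℓ)
        ≤ 2 * (∑ k ∈ Finset.range (L+1),
            Real.sqrt (c₂*c₃) * ((m₀:ℝ) * 2^k) ^ ((κ-κ)/2)) ^ 2 / ε ^ 2
          + ∑ k ∈ Finset.range (L+1), c₃ * ((m₀:ℝ) * 2^k) ^ κ := hcost
      _ ≤ 2 * (c₂*c₃*(B*(-Real.log ε))^2) / ε^2 + D*A^κ*ε^(-2:ℝ) := by
          refine add_le_add ?_ hT
          rw [hSeq]
          apply div_le_div_of_nonneg_right (by nlinarith [hS2]) (by positivity)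
      _ ≤ (2*c₂*c₃*B^2 + D*A^κ) * ε^(-2:ℝ) * (Real.log ε)^2 := by
          rw [hε2]
          have hX2 : 1 ≤ (Real.log ε)^2 := by nlinarith [hX]
          have hu : (0:ℝ) < (ε^2)⁻¹ := by positivity
          have h1 : 2 * (c₂*c₃*(B*(-Real.log ε))^2) / ε^2
              = 2*c₂*c₃*B^2*(Real.log ε)^2*(ε^2)⁻¹ := by
            field_simp
          rw [h1]
          nlinarith [mul_nonneg (mul_nonneg (mul_pos hD0 hAκ).le hu.le)
            (sub_nonneg.2 hX2)]
  · -- φ < κ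
    have hrpos : (0:ℝ) < (κ-φ)/2 := by linarith
    have h2r1 : (1:ℝ) < (2:ℝ)^((κ-φ)/2) :=
      (Real.one_lt_rpow_iff_of_pos (by norm_num)).2 (Or.inl ⟨one_lt_two, hrpos⟩)
    set E := Real.sqrt (c₂*c₃) * ((2:ℝ)^((κ-φ)/2) / ((2:ℝ)^((κ-φ)/2) - 1)) with hEdef
    have hE0 : (0:ℝ) ≤ E := by
      rw [hEdef]
      have h1 : (0:ℝ) < (2:ℝ)^((κ-φ)/2) - 1 := by linarith
      positivity
    have hAκφ : (0:ℝ) < A^(κ-φ) := Real.rpow_pos_of_pos hA0 _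
    refine ⟨2*E^2*A^(κ-φ) + D*A^κ, by positivity, fun ε hε hεe => ?_⟩
    have hε1 : ε < 1 := hεe.trans (by norm_num [Real.exp_lt_one_iff])
    obtain ⟨L, n, hn, hmse, hcost, hmL⟩ :=
      mlmc_core m₀ hm₀ ρ φ κ c₁ c₂ c₃ hρ hc₁ hc₂ hc₃ b V C hV0 hC0 hb hb0 hV hC ε hε hε1
    refine ⟨L, n, hn, hmse, ?_⟩
    rw [if_neg (not_lt.2 hcase.le), if_neg hcase.ne]
    have hε2 : ε^(-2:ℝ) = (ε^2)⁻¹ := by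
      rw [show (-2:ℝ) = -((2:ℕ):ℝ) by norm_num, Real.rpow_neg hε.le, Real.rpow_natCast]
    have hεre : (0:ℝ) < ε ^ (-1/ρ) := Real.rpow_pos_of_pos hε _
    have hmLnn : (0:ℝ) ≤ (m₀:ℝ)*2^L := by positivity
    -- bound on S
    have hS : (∑ k ∈ Finset.range (L+1),
        Real.sqrt (c₂*c₃) * ((m₀:ℝ) * 2^k) ^ ((κ-φ)/2))
          ≤ E * A^((κ-φ)/2) * ε^((-1/ρ)*((κ-φ)/2)) := by
      calc (∑ k ∈ Finset.range (L+1),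
          Real.sqrt (c₂*c₃) * ((m₀:ℝ) * 2^k) ^ ((κ-φ)/2))
          = Real.sqrt (c₂*c₃) * ∑ k ∈ Finset.range (L+1),
              ((m₀:ℝ) * 2^k) ^ ((κ-φ)/2) := by rw [Finset.mul_sum]
        _ ≤ Real.sqrt (c₂*c₃) * ((2:ℝ)^((κ-φ)/2) / ((2:ℝ)^((κ-φ)/2) - 1)
              * ((m₀:ℝ)*2^L)^((κ-φ)/2)) :=
            mul_le_mul_of_nonneg_left (sum_m_rpow_le_of_pos m₀ _ hrpos L)
              (Real.sqrt_nonneg _)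
        _ = E * ((m₀:ℝ)*2^L)^((κ-φ)/2) := by rw [hEdef]; ring
        _ ≤ E * (A * ε^(-1/ρ))^((κ-φ)/2) :=
            mul_le_mul_of_nonneg_left (Real.rpow_le_rpow hmLnn hmL hrpos.le) hE0
        _ = E * A^((κ-φ)/2) * ε^((-1/ρ)*((κ-φ)/2)) := by
            rw [Real.mul_rpow hA0.le hεre.le, ← Real.rpow_mul hε.le]; ring
    have hSnn : (0:ℝ) ≤ ∑ k ∈ Finset.range (L+1),
        Real.sqrt (c₂*c₃) * ((m₀:ℝ) * 2^k) ^ ((κ-φ)/2) :=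
      Finset.sum_nonneg fun k _ => by positivity
    have hA2 : (A^((κ-φ)/2))^2 = A^(κ-φ) := by
      rw [← Real.rpow_natCast (A^((κ-φ)/2)) 2, ← Real.rpow_mul hA0.le]
      congr 1; push_cast; ring
    have hε3 : (ε^((-1/ρ)*((κ-φ)/2)))^2 = ε^(-((κ-φ)/ρ)) := by
      rw [← Real.rpow_natCast (ε^((-1/ρ)*((κ-φ)/2))) 2, ← Real.rpow_mul hε.le]
      congr 1; push_cast; ring
    have hS2 : (∑ k ∈ Finset.range (L+1),
        Real.sqrt (c₂*c₃) * ((m₀:ℝ) * 2^k) ^ ((κ-φ)/2))^2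
          ≤ E^2 * A^(κ-φ) * ε^(-((κ-φ)/ρ)) := by
      have h1 : (∑ k ∈ Finset.range (L+1),
          Real.sqrt (c₂*c₃) * ((m₀:ℝ) * 2^k) ^ ((κ-φ)/2))^2
            ≤ (E * A^((κ-φ)/2) * ε^((-1/ρ)*((κ-φ)/2)))^2 :=
        pow_le_pow_left₀ hSnn hS 2
      calc (∑ k ∈ Finset.range (L+1),
          Real.sqrt (c₂*c₃) * ((m₀:ℝ) * 2^k) ^ ((κ-φ)/2))^2
          ≤ (E * A^((κ-φ)/2) * ε^((-1/ρ)*((κ-φ)/2)))^2 := h1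
        _ = E^2 * (A^((κ-φ)/2))^2 * (ε^((-1/ρ)*((κ-φ)/2)))^2 := by ring
        _ = E^2 * A^(κ-φ) * ε^(-((κ-φ)/ρ)) := by rw [hA2, hε3]
    have hsplit : ε^(-(2+(κ-φ)/ρ)) = ε^(-((κ-φ)/ρ)) * (ε^2)⁻¹ := by
      rw [show -(2+(κ-φ)/ρ) = -((κ-φ)/ρ) + (-2:ℝ) by ring, Real.rpow_add hε, hε2]
    have hT : (∑ k ∈ Finset.range (L+1), c₃ * ((m₀:ℝ) * 2^k) ^ κ)
        ≤ D * A^κ * ε^(-(2+(κ-φ)/ρ)) := by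
      have h1 := mlmc_T_le m₀ κ c₃ hκ hc₃ L _ hmL
      have h2 : (A * ε^(-1/ρ))^κ = A^κ * ε^((-1/ρ)*κ) := by
        rw [Real.mul_rpow hA0.le (Real.rpow_nonneg hε.le _), ← Real.rpow_mul hε.le]
      have h3 : ε^((-1/ρ)*κ) ≤ ε^(-(2+(κ-φ)/ρ)) := by
        apply Real.rpow_le_rpow_of_exponent_ge hε hε1.le
        rw [min_eq_left hcase.le] at hρmin
        have hφρ : φ/ρ ≤ 2 := (div_le_iff₀ hρ).2 (by linarith)
        have e1 : (-1/ρ)*κ = -(κ/ρ) := by ring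
        have e2 : κ/ρ - (κ-φ)/ρ = φ/ρ := by ring
        rw [e1]; linarith
      calc (∑ k ∈ Finset.range (L+1), c₃ * ((m₀:ℝ) * 2^k) ^ κ)
          ≤ D * (A * ε^(-1/ρ))^κ := h1
        _ = D * A^κ * ε^((-1/ρ)*κ) := by rw [h2]; ring
        _ ≤ D * A^κ * ε^(-(2+(κ-φ)/ρ)) := mul_le_mul_of_nonneg_left h3 (by positivity)
    calc (∑ ℓ ∈ Finset.range (L + 1), (n ℓ : ℝ) * C ℓ)
        ≤ 2 * (∑ k ∈ Finset.range (L+1),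
            Real.sqrt (c₂*c₃) * ((m₀:ℝ) * 2^k) ^ ((κ-φ)/2)) ^ 2 / ε ^ 2
          + ∑ k ∈ Finset.range (L+1), c₃ * ((m₀:ℝ) * 2^k) ^ κ := hcost
      _ ≤ 2 * (E^2 * A^(κ-φ) * ε^(-((κ-φ)/ρ))) / ε^2 + D*A^κ*ε^(-(2+(κ-φ)/ρ)) := by
          refine add_le_add ?_ hT
          exact div_le_div_of_nonneg_right (by nlinarith [hS2]) (by positivity)
      _ = (2*E^2*A^(κ-φ) + D*A^κ) * ε^(-(2+(κ-φ)/ρ)) := by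
          rw [hsplit]; ring
end

section
/- (Exactness of the MLMC gradient.) Fix integers 0 ≤ L ≤ L̄, positive dimensions d_0, …, d_{L̄}, and a constant c > 0. For 0 ≤ ℓ₁ ≤ ℓ₂ ≤ L̄ let prolongations I_{ℓ₁}^{ℓ₂} ∈ ℝ^{d_{ℓ₂} × d_{ℓ₁}} be given with I_ℓ^ℓ the identity and I_{ℓ₁}^{ℓ₂} = I_{ℓ₂−1}^{ℓ₂} I_{ℓ₂−2}^{ℓ₂−1} ⋯ I_{ℓ₁}^{ℓ₁+1}, and define restrictions by I_{ℓ₂}^{ℓ₁} = c^{ℓ₁−ℓ₂} (I_{ℓ₁}^{ℓ₂})ᵀ. For ℓ = 0,…,L let J_ℓ^ℓ : ℝ^{d_ℓ} → ℝ and, for ℓ = 1,…,L, J_{ℓ−1}^{ℓ} : ℝ^{d_{ℓ−1}} → ℝ be differentiable, with gradients ∇J taken with respect to the inner products (v,w)_ℓ = vᵀw/d_ℓ. Define G : ℝ^{d_{L̄}} → ℝ^{d_{L̄}} by G(u) = I_0^{L̄} ∇J_0^0(I_{L̄}^0 u) + Σ_{ℓ=1}^{L} I_ℓ^{L̄} (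 ∇J_ℓ^ℓ(I_{L̄}^ℓ u) − I_{ℓ−1}^{ℓ} ∇J_{ℓ−1}^{ℓ}(I_{L̄}^{ℓ−1} u) ). Then G is the exact gradient, with respect to (v,w)_{L̄} = vᵀw/d_{L̄}, of the cost function Ĵ(u) = (c^{L̄} d_0 / (c^0 d_{L̄})) J_0^0(I_{L̄}^0 u) + Σ_{ℓ=1}^{L} [ (c^{L̄} d_ℓ / (c^ℓ d_{L̄})) J_ℓ^ℓ(I_{L̄}^ℓ u) − (c^{L̄} d_{ℓ−1} / (c^{ℓ−1} d_{L̄})) J_{ℓ−1}^{ℓ}(I_{L̄}^{ℓ−1} u) ]. -/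
open Finset Matrix

/-- The gradient of `F : ℝ^N → ℝ` at `v` with respect to the discretized `L²` inner
product `(v, w)_N = vᵀw/N`: the unique vector `g` with `F′(v)[h] = (Σ_i g_i h_i)/N`
(for differentiable `F`, here expressed through `fderiv`). -/
noncomputable def gradD {N : ℕ} (F : (Fin N → ℝ) → ℝ) (v : Fin N → ℝ) : Fin N → ℝ :=
  fun i => (N : ℝ) * fderiv ℝ F v (Pi.single i 1)

lemma fderiv_apply_gradD {N : ℕ} (hN : 1 ≤ N) {F : (Fin N → ℝ) → ℝ} {v : Fin N → ℝ}
    (x : Fin N → ℝ) :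
    fderiv ℝ F v x = (∑ i, gradD F v i * x i) / (N : ℝ) := by
  have hNne : (N : ℝ) ≠ 0 := Nat.cast_ne_zero.mpr (by omega)
  have hx : x = ∑ i, x i • (Pi.single i 1 : Fin N → ℝ) := by
    funext j
    simp [Finset.sum_apply, Pi.single_apply]
  conv_lhs => rw [hx]
  rw [map_sum]
  simp only [_root_.map_smul, smul_eq_mul, gradD]
  rw [eq_div_iff hNne, Finset.sum_mul]
  exact Finset.sum_congr rfl fun i _ => by ring

lemma term_hasFDeriv {m n : ℕ} {F : (Fin n → ℝ) → ℝ} (hF : Differentiable ℝ F)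
    (A : Matrix (Fin n) (Fin m) ℝ) (s : ℝ) (u : Fin m → ℝ) :
    HasFDerivAt (fun w => s * F (A *ᵥ w))
      (s • ((fderiv ℝ F (A *ᵥ u)).comp (A.mulVecLin).toContinuousLinearMap)) u := by
  have h1 : HasFDerivAt (fun w : Fin m → ℝ => A *ᵥ w)
      (A.mulVecLin).toContinuousLinearMap u :=
    (A.mulVecLin.toContinuousLinearMap).hasFDerivAt
  exact ((hF (A *ᵥ u)).hasFDerivAt.comp u h1).const_mul s

lemma dot_transpose {p q : ℕ} (C : Matrix (Fin p) (Fin q) ℝ) (g : Fin q → ℝ)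
    (h : Fin p → ℝ) : ∑ j, g j * (Cᵀ *ᵥ h) j = ∑ i, (C *ᵥ g) i * h i := by
  calc ∑ j, g j * (Cᵀ *ᵥ h) j = g ⬝ᵥ (Cᵀ *ᵥ h) := rfl
    _ = (g ᵥ* Cᵀ) ⬝ᵥ h := Matrix.dotProduct_mulVec _ _ _
    _ = (C *ᵥ g) ⬝ᵥ h := by rw [Matrix.vecMul_transpose]
    _ = ∑ i, (C *ᵥ g) i * h i := rfl

lemma mlmc_transfer (Lbar ℓ : ℕ) (hℓ : ℓ ≤ Lbar) (d : ℕ → ℕ) (hd : ∀ k, 1 ≤ d k)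
    (c : ℝ) (hc : 0 < c)
    (I : (ℓ₁ ℓ₂ : ℕ) → Matrix (Fin (d ℓ₂)) (Fin (d ℓ₁)) ℝ)
    (hrestr : ∀ ℓ₁ ℓ₂, ℓ₁ ≤ ℓ₂ → I ℓ₂ ℓ₁ = (c ^ (ℓ₂ - ℓ₁))⁻¹ • (I ℓ₁ ℓ₂)ᵀ)
    (g : Fin (d ℓ) → ℝ) (h : Fin (d Lbar) → ℝ) :
    (c ^ Lbar * (d ℓ : ℝ) / (c ^ ℓ * (d Lbar : ℝ))) *
      ((∑ j, g j * (I Lbar ℓ *ᵥ h) j) / (d ℓ : ℝ))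
      = (∑ i, (I ℓ Lbar *ᵥ g) i * h i) / (d Lbar : ℝ) := by
  have hcne : c ≠ 0 := ne_of_gt hc
  have hdl : (d ℓ : ℝ) ≠ 0 := Nat.cast_ne_zero.mpr (by have := hd ℓ; omega)
  have hdL : (d Lbar : ℝ) ≠ 0 := Nat.cast_ne_zero.mpr (by have := hd Lbar; omega)
  have hceq : c ^ ℓ * c ^ (Lbar - ℓ) = c ^ Lbar := by
    rw [← pow_add, Nat.add_sub_cancel' hℓ]
  rw [hrestr ℓ Lbar hℓ]
  have : ∑ j, g j * (((c ^ (Lbar - ℓ))⁻¹ • (I ℓ Lbar)ᵀ) *ᵥ h) j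
      = (c ^ (Lbar - ℓ))⁻¹ * ∑ i, (I ℓ Lbar *ᵥ g) i * h i := by
    rw [← dot_transpose, Finset.mul_sum]
    refine Finset.sum_congr rfl fun j _ => ?_
    rw [Matrix.smul_mulVec]
    simp [Pi.smul_apply, smul_eq_mul]; ring
  rw [this]
  field_simp
  linear_combination (-∑ i, (I ℓ Lbar *ᵥ g) i * h i) * hceq

/-- **exactness of the MLMC gradient.**
Given levels `0 ≤ L ≤ L̄` with dimensions `d ℓ`, compatible prolongations `I ℓ₁ ℓ₂`
(`ℓ₁ ≤ ℓ₂`) with restrictions `I ℓ₂ ℓ₁ = c^{ℓ₁−ℓ₂} (I ℓ₁ ℓ₂)ᵀ`, and differentiable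
per-level cost functions `J ℓ = J_ℓ^ℓ` and `Jc ℓ = J_ℓ^{ℓ+1}`, the MLMC gradient estimator
`G(u) = I_0^{L̄} ∇J_0^0(I_{L̄}^0 u) + Σ_{ℓ=1}^L I_ℓ^{L̄} (∇J_ℓ^ℓ(I_{L̄}^ℓ u) −
I_{ℓ−1}^ℓ ∇J_{ℓ−1}^ℓ(I_{L̄}^{ℓ−1} u))` is the exact gradient, w.r.t. `(v,w)_{L̄} = vᵀw/d_{L̄}`,
of `Ĵ(u) = (c^{L̄} d_0/(c^0 d_{L̄})) J_0^0(I_{L̄}^0 u) + Σ_{ℓ=1}^L [(c^{L̄} d_ℓ/(c^ℓ d_{L̄}))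
J_ℓ^ℓ(I_{L̄}^ℓ u) − (c^{L̄} d_{ℓ−1}/(c^{ℓ−1} d_{L̄})) J_{ℓ−1}^ℓ(I_{L̄}^{ℓ−1} u)]`. -/
theorem mlmc_gradient_exact
    (L Lbar : ℕ) (hL : L ≤ Lbar) (d : ℕ → ℕ) (hd : ∀ ℓ, 1 ≤ d ℓ)
    (c : ℝ) (hc : 0 < c)
    (I : (ℓ₁ ℓ₂ : ℕ) → Matrix (Fin (d ℓ₂)) (Fin (d ℓ₁)) ℝ)
    (hII : ∀ ℓ, I ℓ ℓ = 1)
    (hchain : ∀ ℓ₁ ℓ₂, ℓ₁ ≤ ℓ₂ → I ℓ₁ (ℓ₂ + 1) = I ℓ₂ (ℓ₂ + 1) * I ℓ₁ ℓ₂)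
    (hrestr : ∀ ℓ₁ ℓ₂, ℓ₁ ≤ ℓ₂ → I ℓ₂ ℓ₁ = (c ^ (ℓ₂ - ℓ₁))⁻¹ • (I ℓ₁ ℓ₂)ᵀ)
    (J : (ℓ : ℕ) → (Fin (d ℓ) → ℝ) → ℝ)
    (Jc : (ℓ : ℕ) → (Fin (d ℓ) → ℝ) → ℝ)
    (hJ : ∀ ℓ ≤ L, Differentiable ℝ (J ℓ))
    (hJc : ∀ ℓ, ℓ + 1 ≤ L → Differentiable ℝ (Jc ℓ)) :
    ∀ u : Fin (d Lbar) → ℝ,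
      DifferentiableAt ℝ
        (fun w : Fin (d Lbar) → ℝ =>
          (c ^ Lbar * (d 0 : ℝ) / (c ^ 0 * (d Lbar : ℝ))) * J 0 (I Lbar 0 *ᵥ w) +
          ∑ ℓ ∈ Finset.Icc 1 L,
            ((c ^ Lbar * (d ℓ : ℝ) / (c ^ ℓ * (d Lbar : ℝ))) * J ℓ (I Lbar ℓ *ᵥ w) -
             (c ^ Lbar * (d (ℓ - 1) : ℝ) / (c ^ (ℓ - 1) * (d Lbar : ℝ))) *
               Jc (ℓ - 1) (I Lbar (ℓ - 1) *ᵥ w))) u ∧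
      ∀ h : Fin (d Lbar) → ℝ,
        fderiv ℝ
          (fun w : Fin (d Lbar) → ℝ =>
            (c ^ Lbar * (d 0 : ℝ) / (c ^ 0 * (d Lbar : ℝ))) * J 0 (I Lbar 0 *ᵥ w) +
            ∑ ℓ ∈ Finset.Icc 1 L,
              ((c ^ Lbar * (d ℓ : ℝ) / (c ^ ℓ * (d Lbar : ℝ))) * J ℓ (I Lbar ℓ *ᵥ w) -
               (c ^ Lbar * (d (ℓ - 1) : ℝ) / (c ^ (ℓ - 1) * (d Lbar : ℝ))) *
                 Jc (ℓ - 1) (I Lbar (ℓ - 1) *ᵥ w))) u h =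
        (∑ i, (I 0 Lbar *ᵥ gradD (J 0) (I Lbar 0 *ᵥ u) +
            ∑ ℓ ∈ Finset.Icc 1 L,
              I ℓ Lbar *ᵥ (gradD (J ℓ) (I Lbar ℓ *ᵥ u) -
                I (ℓ - 1) ℓ *ᵥ gradD (Jc (ℓ - 1)) (I Lbar (ℓ - 1) *ᵥ u))) i * h i) /
          (d Lbar : ℝ) := by
  intro u
  -- general chain identity
  have chain : ∀ ℓ₀ ℓ₁ ℓ₂, ℓ₀ ≤ ℓ₁ → ℓ₁ ≤ ℓ₂ → I ℓ₁ ℓ₂ * I ℓ₀ ℓ₁ = I ℓ₀ ℓ₂ := by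
    intro ℓ₀ ℓ₁ ℓ₂ h01 h12
    induction ℓ₂, h12 using Nat.le_induction with
    | base => rw [hII, Matrix.one_mul]
    | succ n hn ih =>
        rw [hchain ℓ₁ n hn, Matrix.mul_assoc, ih, ← hchain ℓ₀ n (h01.trans hn)]
  -- derivative of the whole function
  have Htot : HasFDerivAt
      (fun w : Fin (d Lbar) → ℝ =>
        (c ^ Lbar * (d 0 : ℝ) / (c ^ 0 * (d Lbar : ℝ))) * J 0 (I Lbar 0 *ᵥ w) +
        ∑ ℓ ∈ Finset.Icc 1 L,
          ((c ^ Lbar * (d ℓ : ℝ) / (c ^ ℓ * (d Lbar : ℝ))) * J ℓ (I Lbar ℓ *ᵥ w) -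
           (c ^ Lbar * (d (ℓ - 1) : ℝ) / (c ^ (ℓ - 1) * (d Lbar : ℝ))) *
             Jc (ℓ - 1) (I Lbar (ℓ - 1) *ᵥ w)))
      (((c ^ Lbar * (d 0 : ℝ) / (c ^ 0 * (d Lbar : ℝ))) •
          ((fderiv ℝ (J 0) (I Lbar 0 *ᵥ u)).comp
            ((I Lbar 0).mulVecLin).toContinuousLinearMap)) +
        ∑ ℓ ∈ Finset.Icc 1 L,
          (((c ^ Lbar * (d ℓ : ℝ) / (c ^ ℓ * (d Lbar : ℝ))) •
              ((fderiv ℝ (J ℓ) (I Lbar ℓ *ᵥ u)).comp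
                ((I Lbar ℓ).mulVecLin).toContinuousLinearMap)) -
           ((c ^ Lbar * (d (ℓ - 1) : ℝ) / (c ^ (ℓ - 1) * (d Lbar : ℝ))) •
              ((fderiv ℝ (Jc (ℓ - 1)) (I Lbar (ℓ - 1) *ᵥ u)).comp
                ((I Lbar (ℓ - 1)).mulVecLin).toContinuousLinearMap)))) u := by
    refine (term_hasFDeriv (hJ 0 (Nat.zero_le L)) (I Lbar 0) _ u).add
      (HasFDerivAt.fun_sum fun ℓ hℓ => ?_)
    rw [Finset.mem_Icc] at hℓ
    exact (term_hasFDeriv (hJ ℓ hℓ.2) (I Lbar ℓ) _ u).sub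
      (term_hasFDeriv (hJc (ℓ - 1) (by omega)) (I Lbar (ℓ - 1)) _ u)
  refine ⟨Htot.differentiableAt, fun h => ?_⟩
  rw [Htot.fderiv]
  -- evaluate the derivative at h
  simp only [ContinuousLinearMap.add_apply, ContinuousLinearMap.coe_sum',
    Finset.sum_apply, ContinuousLinearMap.sub_apply, ContinuousLinearMap.smul_apply,
    ContinuousLinearMap.coe_comp', Function.comp_apply, smul_eq_mul,
    LinearMap.coe_toContinuousLinearMap', Matrix.mulVecLin_apply]
  -- rewrite the claimed gradient side
  have hRHS :
      (∑ i, (I 0 Lbar *ᵥ gradD (J 0) (I Lbar 0 *ᵥ u) +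
          ∑ ℓ ∈ Finset.Icc 1 L,
            I ℓ Lbar *ᵥ (gradD (J ℓ) (I Lbar ℓ *ᵥ u) -
              I (ℓ - 1) ℓ *ᵥ gradD (Jc (ℓ - 1)) (I Lbar (ℓ - 1) *ᵥ u))) i * h i) /
        (d Lbar : ℝ)
      = (∑ i, (I 0 Lbar *ᵥ gradD (J 0) (I Lbar 0 *ᵥ u)) i * h i) / (d Lbar : ℝ) +
        ∑ ℓ ∈ Finset.Icc 1 L,
          ((∑ i, (I ℓ Lbar *ᵥ gradD (J ℓ) (I Lbar ℓ *ᵥ u)) i * h i) / (d Lbar : ℝ) -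
           (∑ i, (I (ℓ - 1) Lbar *ᵥ gradD (Jc (ℓ - 1)) (I Lbar (ℓ - 1) *ᵥ u)) i * h i) /
             (d Lbar : ℝ)) := by
    have step : ∀ ℓ ∈ Finset.Icc 1 L, ∀ i,
        (I ℓ Lbar *ᵥ (gradD (J ℓ) (I Lbar ℓ *ᵥ u) -
          I (ℓ - 1) ℓ *ᵥ gradD (Jc (ℓ - 1)) (I Lbar (ℓ - 1) *ᵥ u))) i * h i
        = (I ℓ Lbar *ᵥ gradD (J ℓ) (I Lbar ℓ *ᵥ u)) i * h i -
          (I (ℓ - 1) Lbar *ᵥ gradD (Jc (ℓ - 1)) (I Lbar (ℓ - 1) *ᵥ u)) i * h i := by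
      intro ℓ hℓ i
      rw [Finset.mem_Icc] at hℓ
      rw [Matrix.mulVec_sub, Matrix.mulVec_mulVec,
        chain (ℓ - 1) ℓ Lbar (by omega) (hℓ.2.trans hL), Pi.sub_apply, sub_mul]
    rw [Finset.sum_congr rfl (fun i (_ : i ∈ Finset.univ) => by
      rw [Pi.add_apply, Finset.sum_apply, add_mul, Finset.sum_mul]),
      Finset.sum_add_distrib, add_div]
    congr 1
    rw [Finset.sum_comm, Finset.sum_div]
    refine Finset.sum_congr rfl fun ℓ hℓ => ?_
    rw [Finset.sum_congr rfl fun i _ => step ℓ hℓ i, Finset.sum_sub_distrib, sub_div]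
  rw [hRHS]
  -- termwise equality via the transfer lemma
  have key : ∀ ℓ, ℓ ≤ Lbar → ∀ F : (Fin (d ℓ) → ℝ) → ℝ,
      (c ^ Lbar * (d ℓ : ℝ) / (c ^ ℓ * (d Lbar : ℝ))) *
        fderiv ℝ F (I Lbar ℓ *ᵥ u) (I Lbar ℓ *ᵥ h)
      = (∑ i, (I ℓ Lbar *ᵥ gradD F (I Lbar ℓ *ᵥ u)) i * h i) / (d Lbar : ℝ) := by
    intro ℓ hℓ F
    rw [fderiv_apply_gradD (hd ℓ)]
    exact mlmc_transfer Lbar ℓ hℓ d hd c hc I hrestr _ h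
  rw [key 0 (Nat.zero_le Lbar) (J 0)]
  congr 1
  refine Finset.sum_congr rfl fun ℓ hℓ => ?_
  rw [Finset.mem_Icc] at hℓ
  rw [key ℓ (hℓ.2.trans hL) (J ℓ), key (ℓ - 1) (by omega) (Jc (ℓ - 1))]
end

section
/- Let a, A, B > 0 with a ≤ A ≤ e^{−1}, and let 0 < τ < A. Suppose (g_k)_{k ≥ 0} is a sequence of positive reals with a·e^{−k} ≤ g_k ≤ A·e^{−k} for all k, and let K = min{ k : g_k ≤ τ } (which is finite). Suppose the cost of iteration k satisfies 𝒞_k ≤ B·g_k^{−2}·(log g_k)². Then there is a constant C depending only on a, A, B (not on τ) such that the total cost satisfies Σ_{k=0}^{K} 𝒞_k ≤ C·τ^{−2}·(log τ)². -/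
open Finset Real

private lemma rpow_neg_two_eq (x : ℝ) : x ^ (-2:ℝ) = (x^2)⁻¹ := by
  rw [show (-2:ℝ) = ((-2:ℤ):ℝ) by norm_num, Real.rpow_intCast]
  simp [zpow_neg]

set_option maxHeartbeats 1000000 in
/-- **logarithmic case of the MLMC optimization cost theorem.**
If the gradient norms satisfy `a e^{−k} ≤ g_k ≤ A e^{−k}` with `A ≤ e^{−1}`, `K` is the
first iteration with `g_K ≤ τ`, and the cost of iteration `k` is at most
`B g_k^{−2} (log g_k)²`, then the total cost up to iteration `K` is at most
`C τ^{−2} (log τ)²`, where `C` depends only on `a, A, B` and not on `τ`. -/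
theorem mlmc_optimization_cost_logarithmic
    (a A B : ℝ) (ha : 0 < a) (haA : a ≤ A) (hA : A ≤ Real.exp (-1)) (hB : 0 < B) :
    ∃ C : ℝ, 0 < C ∧
      ∀ τ : ℝ, 0 < τ → τ < A →
      ∀ g cost : ℕ → ℝ,
        (∀ k, 0 < g k) →
        (∀ k : ℕ, a * Real.exp (-(k : ℝ)) ≤ g k ∧ g k ≤ A * Real.exp (-(k : ℝ))) →
        (∀ k, cost k ≤ B * g k ^ (-2 : ℝ) * (Real.log (g k)) ^ 2) →
        ∀ K : ℕ, g K ≤ τ → (∀ k < K, τ < g k) →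
          (∑ k ∈ Finset.range (K + 1), cost k) ≤ C * τ ^ (-2 : ℝ) * (Real.log τ) ^ 2 := by
  set L := |Real.log a| with hLdef
  have hL0 : (0:ℝ) ≤ L := abs_nonneg _
  refine ⟨8 * B * a⁻¹ ^ 2 * (1 + L) ^ 2, by positivity, ?_⟩
  intro τ hτ hτA g cost hg hbd hcost K hK hKmin
  have hA0 : 0 < A := ha.trans_le haA
  -- τ ≤ exp(-K)
  have hτK : τ ≤ Real.exp (-(K:ℝ)) := by
    cases K with
    | zero =>
      have : Real.exp (-1) ≤ Real.exp (-(0:ℕ):ℝ) := by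
        apply Real.exp_le_exp.mpr; norm_num
      exact (hτA.le.trans hA).trans this
    | succ n =>
      have h1 : τ < g n := hKmin n (Nat.lt_succ_self n)
      have h2 : g n ≤ A * Real.exp (-(n:ℝ)) := (hbd n).2
      have h3 : A * Real.exp (-(n:ℝ)) ≤ Real.exp (-1) * Real.exp (-(n:ℝ)) :=
        mul_le_mul_of_nonneg_right hA (Real.exp_pos _).le
      have h4 : Real.exp (-1) * Real.exp (-(n:ℝ)) = Real.exp (-((n+1:ℕ):ℝ)) := by
        rw [← Real.exp_add]; push_cast; ring_nf
      calc τ ≤ g n := h1.le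
        _ ≤ Real.exp (-1) * Real.exp (-(n:ℝ)) := h2.trans h3
        _ = Real.exp (-((n+1:ℕ):ℝ)) := h4
  -- log τ bounds
  have hlogτ1 : Real.log τ ≤ -1 := by
    have := Real.log_le_log hτ (hτA.le.trans hA)
    rwa [Real.log_exp] at this
  have hlogτK : Real.log τ ≤ -(K:ℝ) := by
    have := Real.log_le_log hτ hτK
    rwa [Real.log_exp] at this
  have hK1 : ((K:ℝ)+1)^2 ≤ 4 * (Real.log τ)^2 := by
    have h1 : ((K:ℝ)+1) ≤ -2 * Real.log τ := by linarith
    have h2 : (0:ℝ) ≤ (K:ℝ)+1 := by positivity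
    nlinarith
  -- τ^(-2) ≥ (exp 2)^K
  have hτ2 : Real.exp 2 ^ K ≤ τ ^ (-2:ℝ) := by
    rw [rpow_neg_two_eq]
    have h1 : τ^2 ≤ Real.exp (-(K:ℝ))^2 := by
      apply pow_le_pow_left₀ hτ.le hτK
    have h2 : Real.exp (-(K:ℝ))^2 = (Real.exp 2 ^ K)⁻¹ := by
      rw [← Real.exp_nat_mul, ← Real.exp_nat_mul, ← Real.exp_neg]
      congr 1
      push_cast
      ring
    rw [h2] at h1
    have h3 : (0:ℝ) < τ^2 := by positivity
    have h4 : (0:ℝ) < Real.exp 2 ^ K := by positivity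
    calc Real.exp 2 ^ K = ((Real.exp 2 ^ K)⁻¹)⁻¹ := by rw [inv_inv]
      _ ≤ (τ^2)⁻¹ := by
          apply inv_anti₀ h3 h1
  -- abbreviation
  set D := B * a⁻¹ ^ 2 * (1 + L) ^ 2 with hD
  have hD0 : 0 < D := by positivity
  have hlogA : Real.log A ≤ -1 := by
    have := Real.log_le_log hA0 hA
    rwa [Real.log_exp] at this
  have hloga : -L ≤ Real.log a := neg_abs_le _
  -- per-term bound
  have hterm : ∀ k ≤ K, cost k ≤ D * ((K:ℝ)+1)^2 * Real.exp 2 ^ k := by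
    intro k hkK
    have hek : (0:ℝ) < Real.exp (-(k:ℝ)) := Real.exp_pos _
    have hgl : a * Real.exp (-(k:ℝ)) ≤ g k := (hbd k).1
    have hgu : g k ≤ A * Real.exp (-(k:ℝ)) := (hbd k).2
    have hae : (0:ℝ) < a * Real.exp (-(k:ℝ)) := by positivity
    have e1 : Real.exp (-(k:ℝ))^2 = (Real.exp 2 ^ k)⁻¹ := by
      rw [← Real.exp_nat_mul, ← Real.exp_nat_mul, ← Real.exp_neg]
      congr 1
      push_cast
      ring
    have hrp : g k ^ (-2:ℝ) ≤ a⁻¹^2 * Real.exp 2 ^ k := by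
      rw [rpow_neg_two_eq]
      have h1 : (a * Real.exp (-(k:ℝ)))^2 ≤ g k ^2 := pow_le_pow_left₀ hae.le hgl 2
      have h2 : ((a * Real.exp (-(k:ℝ)))^2)⁻¹ = a⁻¹^2 * Real.exp 2 ^ k := by
        rw [mul_pow, e1, mul_inv, inv_inv, inv_pow]
      calc (g k ^2)⁻¹ ≤ ((a * Real.exp (-(k:ℝ)))^2)⁻¹ := inv_anti₀ (by positivity) h1
        _ = a⁻¹^2 * Real.exp 2 ^ k := h2
    have hlogmul_u : Real.log (A * Real.exp (-(k:ℝ))) = Real.log A - (k:ℝ) := by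
      rw [Real.log_mul (ne_of_gt hA0) (ne_of_gt hek), Real.log_exp]; ring
    have hlogmul_l : Real.log (a * Real.exp (-(k:ℝ))) = Real.log a - (k:ℝ) := by
      rw [Real.log_mul (ne_of_gt ha) (ne_of_gt hek), Real.log_exp]; ring
    have hub : Real.log (g k) ≤ -((k:ℝ)+1) := by
      have := Real.log_le_log (hg k) hgu
      rw [hlogmul_u] at this
      linarith
    have hlb : -((1+L) * ((k:ℝ)+1)) ≤ Real.log (g k) := by
      have := Real.log_le_log hae hgl
      rw [hlogmul_l] at this
      have hk0 : (0:ℝ) ≤ (k:ℝ) := Nat.cast_nonneg k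
      nlinarith
    have hlog2 : (Real.log (g k))^2 ≤ (1+L)^2 * ((k:ℝ)+1)^2 := by
      have hb : Real.log (g k) ≤ (1+L) * ((k:ℝ)+1) := by
        have hk0 : (0:ℝ) ≤ (k:ℝ) := Nat.cast_nonneg k
        nlinarith
      have := sq_le_sq' hlb hb
      calc (Real.log (g k))^2 ≤ ((1+L) * ((k:ℝ)+1))^2 := this
        _ = (1+L)^2 * ((k:ℝ)+1)^2 := by ring
    have hk1 : ((k:ℝ)+1)^2 ≤ ((K:ℝ)+1)^2 := by
      have hkK' : (k:ℝ) ≤ (K:ℝ) := by exact_mod_cast hkK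
      nlinarith
    calc cost k ≤ B * g k ^ (-2:ℝ) * (Real.log (g k))^2 := hcost k
      _ ≤ B * (a⁻¹^2 * Real.exp 2 ^ k) * ((1+L)^2 * ((k:ℝ)+1)^2) := by
          apply mul_le_mul (mul_le_mul_of_nonneg_left hrp hB.le) hlog2 (sq_nonneg _)
            (by positivity)
      _ = D * ((k:ℝ)+1)^2 * Real.exp 2 ^ k := by rw [hD]; ring
      _ ≤ D * ((K:ℝ)+1)^2 * Real.exp 2 ^ k := by
          apply mul_le_mul_of_nonneg_right (mul_le_mul_of_nonneg_left hk1 hD0.le)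
            (by positivity)
  have hsum : ∑ k ∈ Finset.range (K + 1), cost k
      ≤ D * ((K:ℝ)+1)^2 * ∑ k ∈ Finset.range (K + 1), Real.exp 2 ^ k := by
    rw [Finset.mul_sum]
    apply Finset.sum_le_sum
    intro k hk
    exact hterm k (Finset.mem_range_succ_iff.mp hk)
  have hr3 : (3:ℝ) ≤ Real.exp 2 := by
    have := Real.add_one_le_exp (2:ℝ)
    linarith
  have hgeom : ∑ k ∈ Finset.range (K + 1), Real.exp 2 ^ k ≤ 2 * Real.exp 2 ^ K := by
    rw [geom_sum_eq (by linarith : Real.exp 2 ≠ 1)]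
    rw [div_le_iff₀ (by linarith)]
    have hpow : (0:ℝ) < Real.exp 2 ^ K := by positivity
    have hsucc : Real.exp 2 ^ (K+1) = Real.exp 2 * Real.exp 2 ^ K := by ring
    nlinarith
  have hlog2nn : (0:ℝ) ≤ (Real.log τ)^2 := sq_nonneg _
  have hτ2nn : (0:ℝ) ≤ τ ^ (-2:ℝ) := by positivity
  calc ∑ k ∈ Finset.range (K + 1), cost k
      ≤ D * ((K:ℝ)+1)^2 * ∑ k ∈ Finset.range (K + 1), Real.exp 2 ^ k := hsum
    _ ≤ D * ((K:ℝ)+1)^2 * (2 * Real.exp 2 ^ K) := by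
        apply mul_le_mul_of_nonneg_left hgeom (by positivity)
    _ ≤ D * (4 * (Real.log τ)^2) * (2 * τ ^ (-2:ℝ)) := by
        apply mul_le_mul (mul_le_mul_of_nonneg_left hK1 hD0.le) (by linarith)
          (by positivity) (by positivity)
    _ = 8 * B * a⁻¹ ^ 2 * (1 + L) ^ 2 * τ ^ (-2:ℝ) * (Real.log τ)^2 := by
        rw [hD]; ring
end
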